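/- arXiv:2103.12387 — 6 statements merged into one kernel-verified Lean document; each statement's English description precedes it below -/
import Mathlib

section
/- Let X be a set with a binary operation d and element 0 such that d(x,0)=x and d(x,x)=0 for all x. If moreover d(d(x,z),d(y,z))=d(x,y) for all x,y,z, then the operation x∘y := d(x,d(0,y)) makes X into a group with identity 0, in which the inverse of x is d(0,x) and d(x,y)=x∘(d(0,y)) is the difference mapping, i.e. d(x,y)∘y = x. -/
/-!
With `y := 0` the cocycle identity `d (d x z) (d y z) = d x y` reads `d (d x z) (d 0 z) = x`,
so `x ∘ z = d x (d 0 z)` undoes `d · z`; taking moreover `x := z` gives `d 0 (d 0 z) = z`.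
Substituting the first identity back into the cocycle identity with `z := d 0 z` gives
`d x (d y z) = d (d x (d 0 z)) y`, which is associativity of `∘`.
-/

namespace Subtraction

variable {X : Type*} {d : X → X → X} {zero : X}

theorem sub_sub_neg_cancel (h1 : ∀ x, d x zero = x)
    (h3 : ∀ x y z, d (d x z) (d y z) = d x y) (x y : X) :
    d (d x y) (d zero y) = x :=
  (h3 x zero y).trans (h1 x)

theorem neg_neg (h1 : ∀ x, d x zero = x) (h2 : ∀ x, d x x = zero)
    (h3 : ∀ x y z, d (d x z) (d y z) = d x y) (x : X) :
    d zero (d zero x) = x := by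
  simpa only [h2, h1] using h3 x zero x

theorem sub_sub_eq (h1 : ∀ x, d x zero = x)
    (h3 : ∀ x y z, d (d x z) (d y z) = d x y) (x y z : X) :
    d x (d y z) = d (d x (d zero z)) y := by
  simpa only [sub_sub_neg_cancel h1 h3] using (h3 x (d y z) (d zero z)).symm

end Subtraction

/-- A subtraction `d` with `d x 0 = x`, `d x x = 0` satisfying the cocycle identity
`d (d x z) (d y z) = d x y` yields a group structure `x ∘ y := d x (d 0 y)` with
identity `0`, inverse `d 0 x`, and `d` as difference mapping: `d x y ∘ y = x`. -/
theorem stmt_0 {X : Type*} (d : X → X → X) (zero : X)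
    (h1 : ∀ x, d x zero = x) (h2 : ∀ x, d x x = zero)
    (h3 : ∀ x y z, d (d x z) (d y z) = d x y) :
    (∀ x y z, d x (d zero (d y (d zero z))) = d (d x (d zero y)) (d zero z)) ∧
    (∀ x, d x (d zero zero) = x) ∧
    (∀ x, d zero (d zero x) = x) ∧
    (∀ x, d x (d zero (d zero x)) = zero) ∧
    (∀ x, d (d zero x) (d zero x) = zero) ∧
    (∀ x y, d (d x y) (d zero y) = x) := by
  have neg_neg := Subtraction.neg_neg h1 h2 h3
  refine ⟨fun x y z => ?assoc, fun x => by rw [h1, h1], neg_neg,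
    fun x => by rw [neg_neg, h2], fun x => h2 _, Subtraction.sub_sub_neg_cancel h1 h3⟩
  calc d x (d zero (d y (d zero z)))
      = d x (d (d zero z) y) := by rw [Subtraction.sub_sub_eq h1 h3 zero, neg_neg]
    _ = d (d x (d zero y)) (d zero z) := Subtraction.sub_sub_eq h1 h3 x _ _
end

section
/- Let X be a set with a ternary operation p. Define, for a function f:X→Y with section s (f∘s=id), the binary operation on the set R[f]={(u,v):f(u)=f(v)} by d((u,v)) = p(u,v,s(f(u))). Then p satisfies the Mal'tsev identities p(x,y,y)=x and p(y,y,x)=x for all x,y if and only if for every split epimorphism of sets (f,s), the operation d is a subtraction on R[f] fibered over X, i.e. d(u,u)=s f(u) and d(u,s f(u))=u for all u, v with f(u)=f(v). -/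
theorem stmt_5_general {X : Type} (p : X → X → X → X) :
    (∀ x y : X, p x y y = x ∧ p y y x = x) ↔
      (∀ (Y : Type) (f : X → Y) (s : Y → X), (∀ y, f (s y) = y) →
        ∀ u v : X, f u = f v →
          p u u (s (f u)) = s (f u) ∧ p u (s (f u)) (s (f u)) = u) := by
  constructor
  · intro h Y f s _ u _ _
    exact ⟨(h (s (f u)) u).2, (h u (s (f u))).1⟩
  · intro h x y
    -- the split epimorphism `X → Unit` with constant section `z` reduces the subtraction laws
    -- to the Mal'tsev identities with `z` as the repeated argument
    have subtraction_at (z : X) := h Unit (fun _ => ()) (fun _ => z) (fun _ => rfl)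
    exact ⟨(subtraction_at y x x rfl).2, (subtraction_at x y y rfl).1⟩

/-- A ternary operation `p` with `p x x x = x` satisfies the Mal'tsev identities iff,
for every split epimorphism of sets `(f, s)`, the operation
`d (u,v) = p u v (s (f u))` is a subtraction on the kernel pair `R[f]` fibered over `X`,
i.e. `d (u,u) = s (f u)` and `d (u, s (f u)) = u`. -/
theorem stmt_5 {X : Type} (p : X → X → X → X) (hid : ∀ x, p x x x = x) :
    (∀ x y : X, p x y y = x ∧ p y y x = x) ↔
      (∀ (Y : Type) (f : X → Y) (s : Y → X), (∀ y, f (s y) = y) →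
        ∀ u v : X, f u = f v →
          p u u (s (f u)) = s (f u) ∧ p u (s (f u)) (s (f u)) = u) :=
  stmt_5_general p
end

section
/- Let V be a pointed algebraic structure (carrier X, constant 0) equipped with a binary operation ∘ and a unary operation υ satisfying a∘0 = 0∘a and υ(a∘0)=a for all a. Given sets A, Z and a subset W ⊆ A×Z closed under the componentwise operations (with componentwise ∘ and υ and containing (0,0)), such that (a,0)∈W for all a with (a,z)∈W for some z, and (0,z)∈W for all z with (a,z)∈W for some a; let T be an equivalence relation on W compatible with ∘ and υ (a congruence). If (0,b) T (0,c), then for every a with (a,b)∈W and (a,c)∈W we have (a,b) T (a,c). -/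
theorem stmt_7_general {A Z : Type*}
    (mulA : A → A → A) (upA : A → A) (zA : A)
    (mulZ : Z → Z → Z) (upZ : Z → Z) (zZ : Z)
    (hA2 : ∀ a, upA (mulA a zA) = a)
    (hZ1 : ∀ z, mulZ z zZ = mulZ zZ z) (hZ2 : ∀ z, upZ (mulZ z zZ) = z)
    (T : A × Z → A × Z → Prop) (hTeq : Equivalence T)
    (hTmul : ∀ u u' v v', T u u' → T v v' →
      T (mulA u.1 v.1, mulZ u.2 v.2) (mulA u'.1 v'.1, mulZ u'.2 v'.2))
    (hTup : ∀ u u', T u u' → T (upA u.1, upZ u.2) (upA u'.1, upZ u'.2))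
    (a : A) (b c : Z)
    (hT : T (zA, b) (zA, c)) :
    T (a, b) (a, c) := by
  -- `(a, z)` is recovered from `(0, z)` as `υ ((a, 0) ∘ (0, z))`, since `0 ∘ z = z ∘ 0`.
  have recover : ∀ z, (upA (mulA a zA), upZ (mulZ zZ z)) = (a, z) := fun z => by
    rw [hA2, ← hZ1, hZ2]
  have hprod := hTmul (a, zZ) (a, zZ) (zA, b) (zA, c) (hTeq.refl _) hT
  simpa only [recover] using hTup _ _ hprod

/-- In a pointed variety with a binary `∘` and unary `υ` satisfying `a∘0 = 0∘a` and
`υ (a∘0) = a`, any congruence `T` on a punctual relation `W ⊆ A × Z` satisfies: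
if `(0,b) T (0,c)` then `(a,b) T (a,c)` whenever both pairs lie in `W`. -/
theorem stmt_7 {A Z : Type*}
    (mulA : A → A → A) (upA : A → A) (zA : A)
    (mulZ : Z → Z → Z) (upZ : Z → Z) (zZ : Z)
    (hA1 : ∀ a, mulA a zA = mulA zA a) (hA2 : ∀ a, upA (mulA a zA) = a)
    (hZ1 : ∀ z, mulZ z zZ = mulZ zZ z) (hZ2 : ∀ z, upZ (mulZ z zZ) = z)
    (W : A → Z → Prop)
    (hW0 : W zA zZ)
    (hWmul : ∀ a z a' z', W a z → W a' z' → W (mulA a a') (mulZ z z'))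
    (hWup : ∀ a z, W a z → W (upA a) (upZ z))
    (hWl : ∀ a z, W a z → W a zZ)
    (hWr : ∀ a z, W a z → W zA z)
    (T : A × Z → A × Z → Prop) (hTeq : Equivalence T)
    (hTmul : ∀ u u' v v', T u u' → T v v' →
      T (mulA u.1 v.1, mulZ u.2 v.2) (mulA u'.1 v'.1, mulZ u'.2 v'.2))
    (hTup : ∀ u u', T u u' → T (upA u.1, upZ u.2) (upA u'.1, upZ u'.2))
    (a : A) (b c : Z)
    (hT : T (zA, b) (zA, c)) (hab : W a b) (hac : W a c) :
    T (a, b) (a, c) :=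
  stmt_7_general mulA upA zA mulZ upZ zZ hA2 hZ1 hZ2 T hTeq hTmul hTup a b c hT
end

section
/- Let V be a pointed algebraic structure (carrier X, constant 0) with a binary operation d and a unary operation ε satisfying d(a,a)=0 and ε(d(a,0))=a for all a. Given a punctual relation W ⊆ A×Z between two algebras (closed under componentwise operations, containing (a,0) and (0,z) whenever appropriate) and a congruence T on W: if (a,b) T (a,c) then (0,b) T (0,c). -/
theorem eps_zero_eq_zero {X : Type*} {d : X → X → X} {ε : X → X} {z : X}
    (hd : ∀ x, d x x = z) (hε : ∀ x, ε (d x z) = x) : ε z = z := by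
  simpa only [hd] using hε z

theorem stmt_8_general {A Z : Type*}
    (dA : A → A → A) (eA : A → A) (zA : A)
    (dZ : Z → Z → Z) (eZ : Z → Z) (zZ : Z)
    (hA1 : ∀ a, dA a a = zA) (hA2 : ∀ a, eA (dA a zA) = a)
    (hZ2 : ∀ z, eZ (dZ z zZ) = z)
    (T : A × Z → A × Z → Prop) (hTeq : Equivalence T)
    (hTd : ∀ u u' v v', T u u' → T v v' →
      T (dA u.1 v.1, dZ u.2 v.2) (dA u'.1 v'.1, dZ u'.2 v'.2))
    (hTe : ∀ u u', T u u' → T (eA u.1, eZ u.2) (eA u'.1, eZ u'.2))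
    (a : A) (b c : Z)
    (hT : T (a, b) (a, c)) :
    T (zA, b) (zA, c) := by
  -- `d` against the fixed pair `(a, 0)` clears the first coordinate; `ε` then restores `b` and `c`.
  have hd : T (zA, dZ b zZ) (zA, dZ c zZ) := by
    simpa only [hA1] using hTd (a, b) (a, c) (a, zZ) (a, zZ) hT (hTeq.refl _)
  simpa only [eps_zero_eq_zero hA1 hA2, hZ2] using hTe _ _ hd

/-- In a pointed variety with a binary `d` and unary `ε` satisfying `d a a = 0` and
`ε (d a 0) = a`, any congruence `T` on a punctual relation `W ⊆ A × Z` satisfies: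
if `(a,b) T (a,c)` then `(0,b) T (0,c)`. -/
theorem stmt_8 {A Z : Type*}
    (dA : A → A → A) (eA : A → A) (zA : A)
    (dZ : Z → Z → Z) (eZ : Z → Z) (zZ : Z)
    (hA1 : ∀ a, dA a a = zA) (hA2 : ∀ a, eA (dA a zA) = a)
    (hZ1 : ∀ z, dZ z z = zZ) (hZ2 : ∀ z, eZ (dZ z zZ) = z)
    (W : A → Z → Prop)
    (hW0 : W zA zZ)
    (hWl : ∀ a z, W a z → W a zZ)
    (hWr : ∀ a z, W a z → W zA z)
    (hWd : ∀ a z a' z', W a z → W a' z' → W (dA a a') (dZ z z'))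
    (hWe : ∀ a z, W a z → W (eA a) (eZ z))
    (T : A × Z → A × Z → Prop) (hTeq : Equivalence T)
    (hTd : ∀ u u' v v', T u u' → T v v' →
      T (dA u.1 v.1, dZ u.2 v.2) (dA u'.1 v'.1, dZ u'.2 v'.2))
    (hTe : ∀ u u', T u u' → T (eA u.1, eZ u.2) (eA u'.1, eZ u'.2))
    (a : A) (b c : Z)
    (hT : T (a, b) (a, c)) (hab : W a b) (hac : W a c) :
    T (zA, b) (zA, c) :=
  stmt_8_general dA eA zA dZ eZ zZ hA1 hA2 hZ2 T hTeq hTd hTe a b c hT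
end

section
/- Let X be a set with binary operation d and element 0 such that d(x,0)=x, d(x,x)=0, and d(d(x,z),d(y,z))=d(x,y). Suppose additionally d(x,d(x,y))=y for all x,y. Then x∘y := d(x,d(0,y)) defines an abelian group structure on X with identity 0. -/
/-!
Read `d x y` as `x - y` and `d zero y` as `-y`. The cocycle identity with `z := y` gives
`-(x - y) = y - x`, and the involution law `d x (d x y) = y` then yields `(x + y) - y = x`
and right cancellation, from which commutativity follows. Associativity comes from the cocycle
identity in the form `(x - z) - w = x - (w + z)`.
-/

section Subtraction

variable {X : Type*} {d : X → X → X} {zero : X}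

theorem d_zero_right (h2 : ∀ x, d x x = zero) (h4 : ∀ x y, d x (d x y) = y) (x : X) :
    d x zero = x := by
  simpa only [h2] using h4 x x

theorem d_zero_d (h2 : ∀ x, d x x = zero) (h3 : ∀ x y z, d (d x z) (d y z) = d x y)
    (x y : X) : d zero (d x y) = d y x := by
  simpa only [h2] using h3 y x y

theorem d_d_self_left (h2 : ∀ x, d x x = zero) (h3 : ∀ x y z, d (d x z) (d y z) = d x y)
    (h4 : ∀ x y, d x (d x y) = y) (x y : X) : d (d x y) x = d zero y := by
  rw [← d_zero_d h2 h3, h4]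

theorem eq_of_d_eq_zero (h2 : ∀ x, d x x = zero) (h3 : ∀ x y z, d (d x z) (d y z) = d x y)
    (h4 : ∀ x y, d x (d x y) = y) {p q : X} (h : d p q = zero) : p = q := by
  calc p = d q (d q p) := (h4 q p).symm
    _ = q := by rw [← d_zero_d h2 h3 p q, h, h2, d_zero_right h2 h4]

theorem d_left_injective (h2 : ∀ x, d x x = zero) (h3 : ∀ x y z, d (d x z) (d y z) = d x y)
    (h4 : ∀ x y, d x (d x y) = y) (z : X) : Function.Injective (d · z) := by
  intro p q h
  apply eq_of_d_eq_zero h2 h3 h4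
  rw [← h3 p q z, show d p z = d q z from h, h2]

theorem d_d_d_zero_cancel (h2 : ∀ x, d x x = zero) (h3 : ∀ x y z, d (d x z) (d y z) = d x y)
    (h4 : ∀ x y, d x (d x y) = y) (x y : X) : d (d x (d zero y)) y = x := by
  have h := h4 (d x (d zero y)) x
  rwa [d_d_self_left h2 h3 h4, h4] at h

theorem d_d_zero_comm (h2 : ∀ x, d x x = zero) (h3 : ∀ x y z, d (d x z) (d y z) = d x y)
    (h4 : ∀ x y, d x (d x y) = y) (x y : X) : d x (d zero y) = d y (d zero x) := by
  apply d_left_injective h2 h3 h4 y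
  simp only [d_d_d_zero_cancel h2 h3 h4, d_d_self_left h2 h3 h4, h4]

theorem d_d_eq_d_d_d_zero (h2 : ∀ x, d x x = zero) (h3 : ∀ x y z, d (d x z) (d y z) = d x y)
    (h4 : ∀ x y, d x (d x y) = y) (x z w : X) : d (d x z) w = d x (d w (d zero z)) := by
  simpa only [d_d_d_zero_cancel h2 h3 h4] using h3 x (d w (d zero z)) z

end Subtraction

theorem stmt_11_general {X : Type*} (d : X → X → X) (zero : X)
    (h2 : ∀ x, d x x = zero)
    (h3 : ∀ x y z, d (d x z) (d y z) = d x y)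
    (h4 : ∀ x y, d x (d x y) = y) :
    (∀ x y z, d x (d zero (d y (d zero z))) = d (d x (d zero y)) (d zero z)) ∧
    (∀ x y, d x (d zero y) = d y (d zero x)) ∧
    (∀ x, d x (d zero zero) = x) ∧
    (∀ x, d zero (d zero x) = x) ∧
    (∀ x, d x (d zero (d zero x)) = zero) := by
  refine ⟨fun x y z => ?_, d_d_zero_comm h2 h3 h4, fun x => ?_, h4 zero, fun x => ?_⟩
  · rw [d_zero_d h2 h3 y, d_d_eq_d_d_d_zero h2 h3 h4 x, h4]
  · rw [h2, d_zero_right h2 h4]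
  · rw [h4, h2]

/-- A subtraction with the cocycle identity and `d x (d x y) = y` yields an abelian
group structure `x ∘ y := d x (d 0 y)` with identity `0`. -/
theorem stmt_11 {X : Type*} (d : X → X → X) (zero : X)
    (h1 : ∀ x, d x zero = x) (h2 : ∀ x, d x x = zero)
    (h3 : ∀ x y z, d (d x z) (d y z) = d x y)
    (h4 : ∀ x y, d x (d x y) = y) :
    (∀ x y z, d x (d zero (d y (d zero z))) = d (d x (d zero y)) (d zero z)) ∧
    (∀ x y, d x (d zero y) = d y (d zero x)) ∧
    (∀ x, d x (d zero zero) = x) ∧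
    (∀ x, d zero (d zero x) = x) ∧
    (∀ x, d x (d zero (d zero x)) = zero) :=
  stmt_11_general d zero h2 h3 h4
end

section
/- Let X be a set with a ternary Mal'tsev operation p (i.e. p(x,y,y)=x and p(y,y,x)=x) which is autonomous (i.e. p is a homomorphism X×X×X→X for the structure p itself: p(p(a,b,c),p(a',b',c'),p(a'',b'',c''))=p(p(a,a',a''),p(b,b',b''),p(c,c',c''))). Then for any fixed e∈X, x∘y:=p(x,e,y) defines an abelian group structure on X with identity e. -/
/-!
Autonomy says that applying `p` to the rows of a `3 × 3` array of elements and then to the results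
gives the same as doing so with the columns. Each group law is one such array, filled with `e`
except for a few entries, so that the Mal'tsev identities collapse its rows on one side and its
columns on the other. The inverse of `x` is `p e x e`.
-/

def IsMaltsevOp {X : Type*} (p : X → X → X → X) : Prop :=
  (∀ x y : X, p x y y = x) ∧ ∀ x y : X, p y y x = x

def IsAutonomous {X : Type*} (p : X → X → X → X) : Prop :=
  ∀ a b c a' b' c' a'' b'' c'' : X,
    p (p a b c) (p a' b' c') (p a'' b'' c'') = p (p a a' a'') (p b b' b'') (p c c' c'')

namespace IsMaltsevOp

variable {X : Type*} {p : X → X → X → X}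

theorem comm (hp : IsMaltsevOp p) (ha : IsAutonomous p) (e x y : X) :
    p x e y = p y e x := by
  simpa only [hp.1, hp.2] using ha e e x e e e y e e

theorem assoc (hp : IsMaltsevOp p) (ha : IsAutonomous p) (e x y z : X) :
    p (p x e y) e z = p x e (p y e z) := by
  simpa only [hp.1, hp.2] using ha x e y e e e e e z

theorem mul_inv (hp : IsMaltsevOp p) (ha : IsAutonomous p) (e x : X) :
    p x e (p e x e) = e := by
  simpa only [hp.1, hp.2] using (ha x e e e e x e e e).symm

end IsMaltsevOp

/-- An autonomous Mal'tsev operation `p` yields, for each `e`, an abelian group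
structure `x ∘ y := p x e y` with identity `e`. -/
theorem stmt_13 {X : Type*} (p : X → X → X → X)
    (hm1 : ∀ x y : X, p x y y = x) (hm2 : ∀ x y : X, p y y x = x)
    (haut : ∀ a b c a' b' c' a'' b'' c'' : X,
      p (p a b c) (p a' b' c') (p a'' b'' c'') =
        p (p a a' a'') (p b b' b'') (p c c' c'')) (e : X) :
    (∀ x y z : X, p (p x e y) e z = p x e (p y e z)) ∧
    (∀ x y : X, p x e y = p y e x) ∧
    (∀ x : X, p e e x = x) ∧
    (∀ x : X, p x e e = x) ∧
    (∀ x : X, ∃ y : X, p x e y = e ∧ p y e x = e) := by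
  have hp : IsMaltsevOp p := ⟨hm1, hm2⟩
  refine ⟨hp.assoc haut e, hp.comm haut e, fun x => hm2 x e, fun x => hm1 x e, fun x => ?_⟩
  exact ⟨p e x e, hp.mul_inv haut e x, (hp.comm haut e _ x).trans (hp.mul_inv haut e x)⟩
end
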